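/- arXiv:1410.8663 — 7 statements merged into one kernel-verified Lean document; each statement's English description precedes it below -/
import Mathlib

section
/- There is no compact set T ⊆ ℝ⁴ such that |T_{{1,2}}| = |T_{{2,3}}| = |T_{{3,4}}| = 1, |T_{{1,3}}| = |T_{{2,4}}| = 4, and |T_{{1,2,3}}| = |T_{{2,3,4}}| = 2. -/
open MeasureTheory
open scoped ENNReal NNReal

/-- The `|S|`-dimensional Lebesgue volume of the orthogonal projection of `T ⊆ ℝⁿ`
onto the coordinate subspace indexed by `S`. -/
noncomputable def projVol {n : ℕ} (T : Set (Fin n → ℝ)) (S : Finset (Fin n)) : ℝ :=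
  (volume ((fun (x : Fin n → ℝ) (i : S) => x i.1) '' T)).toReal

section helpers

open Set

/-- Volume of image under a measure preserving measurable equiv. -/
lemma vol_image_eq {α β : Type*} [MeasureSpace α] [MeasureSpace β] (e : α ≃ᵐ β)
    (he : MeasurePreserving e volume volume) {A : Set α} (hA : MeasurableSet A) :
    volume (⇑e '' A) = volume A := by
  rw [MeasurableEquiv.image_eq_preimage_symm]
  exact (he.symm e).measure_preimage hA.nullMeasurableSet

/-- Equiv from `Fin 2` to a two-element finset. -/
def pairEquiv (i j : Fin 4) (hij : j ≠ i) : Fin 2 ≃ ({i, j} : Finset (Fin 4)) where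
  toFun t := if t = 0 then ⟨i, by simp⟩ else ⟨j, by simp⟩
  invFun a := if a.1 = i then 0 else 1
  left_inv t := by fin_cases t <;> simp [hij]
  right_inv a := by
    rcases a with ⟨a, ha⟩
    simp only [Finset.mem_insert, Finset.mem_singleton] at ha
    rcases ha with rfl | rfl
    · simp
    · simp [hij]

/-- Equiv from `Fin 3` to a three-element finset. -/
def tripleEquiv (i j k : Fin 4) (hji : j ≠ i) (hki : k ≠ i) (hkj : k ≠ j) :
    Fin 3 ≃ ({i, j, k} : Finset (Fin 4)) where
  toFun t := if t = 0 then ⟨i, by simp⟩ else if t = 1 then ⟨j, by simp⟩ else ⟨k, by simp⟩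
  invFun a := if a.1 = i then 0 else if a.1 = j then 1 else 2
  left_inv t := by fin_cases t <;> simp [hji, hki, hkj]
  right_inv a := by
    rcases a with ⟨a, ha⟩
    simp only [Finset.mem_insert, Finset.mem_singleton] at ha
    rcases ha with rfl | rfl | rfl
    · simp
    · simp [hji]
    · simp [hki, hkj]

lemma pair_volume (T : Set (Fin 4 → ℝ)) (hT : IsCompact T) (i j : Fin 4) (hij : j ≠ i) :
    volume ((fun (x : Fin 4 → ℝ) (a : ({i, j} : Finset (Fin 4))) => x a.1) '' T)
      = volume ((fun x : Fin 4 → ℝ => (x i, x j)) '' T) := by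
  set e2 := pairEquiv i j hij with he2
  set ψ := MeasurableEquiv.piCongrLeft (fun _ : ({i, j} : Finset (Fin 4)) => ℝ) e2 with hψdef
  have hψ : MeasurePreserving ψ volume volume :=
    volume_measurePreserving_piCongrLeft _ e2
  set φ := (MeasurableEquiv.finTwoArrow : (Fin 2 → ℝ) ≃ᵐ ℝ × ℝ) with hφdef
  have hφ : MeasurePreserving φ volume volume := volume_preserving_finTwoArrow ℝ
  have hmid : MeasurableSet ((fun x : Fin 4 → ℝ => fun t : Fin 2 => x (e2 t).1) '' T) := by
    refine (hT.image ?_).isClosed.measurableSet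
    exact continuous_pi fun t => continuous_apply _
  have h1 : (fun (x : Fin 4 → ℝ) (a : ({i, j} : Finset (Fin 4))) => x a.1) '' T
      = ⇑ψ '' ((fun x : Fin 4 → ℝ => fun t : Fin 2 => x (e2 t).1) '' T) := by
    rw [Set.image_image]
    refine (Set.image_congr fun x _ => ?_).symm
    funext a
    rw [hψdef, MeasurableEquiv.coe_piCongrLeft, Equiv.piCongrLeft_apply,
      eq_rec_constant, e2.apply_symm_apply]
  have h2 : (fun x : Fin 4 → ℝ => (x i, x j)) '' T
      = ⇑φ '' ((fun x : Fin 4 → ℝ => fun t : Fin 2 => x (e2 t).1) '' T) := by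
    rw [Set.image_image]
    refine (Set.image_congr fun x _ => ?_).symm
    simp [hφdef, he2, pairEquiv]
  rw [h1, h2, vol_image_eq ψ hψ hmid, vol_image_eq φ hφ hmid]

lemma triple_volume (T : Set (Fin 4 → ℝ)) (hT : IsCompact T) (i j k : Fin 4)
    (hji : j ≠ i) (hki : k ≠ i) (hkj : k ≠ j) :
    volume ((fun (x : Fin 4 → ℝ) (a : ({i, j, k} : Finset (Fin 4))) => x a.1) '' T)
      = volume ((fun x : Fin 4 → ℝ => (x i, (x j, x k))) '' T) := by
  set e3 := tripleEquiv i j k hji hki hkj with he3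
  set ψ := MeasurableEquiv.piCongrLeft (fun _ : ({i, j, k} : Finset (Fin 4)) => ℝ) e3 with hψdef
  have hψ : MeasurePreserving ψ volume volume :=
    volume_measurePreserving_piCongrLeft _ e3
  set φ1 := (MeasurableEquiv.piFinSuccAbove (fun _ : Fin 3 => ℝ) 0) with hφ1def
  have hφ1 : MeasurePreserving φ1 volume volume :=
    volume_preserving_piFinSuccAbove (fun _ : Fin 3 => ℝ) 0
  set φ2 := (MeasurableEquiv.prodCongr (MeasurableEquiv.refl ℝ)
    (MeasurableEquiv.finTwoArrow : (Fin 2 → ℝ) ≃ᵐ ℝ × ℝ)) with hφ2def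
  have hφ2 : MeasurePreserving φ2 volume volume := by
    have h := (MeasurePreserving.id (volume : Measure ℝ)).prod
      (volume_preserving_finTwoArrow ℝ)
    rw [← Measure.volume_eq_prod, ← Measure.volume_eq_prod] at h
    exact h
  -- intermediate sets
  have hmid1M : MeasurableSet ((fun x : Fin 4 → ℝ => fun t : Fin 3 => x (e3 t).1) '' T) := by
    refine (hT.image ?_).isClosed.measurableSet
    exact continuous_pi fun t => continuous_apply _
  have hmid2M : MeasurableSet
      ((fun x : Fin 4 → ℝ => ((x i : ℝ), fun t : Fin 2 => x (e3 t.succ).1)) '' T) := by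
    refine (hT.image ?_).isClosed.measurableSet
    exact (continuous_apply i).prodMk (continuous_pi fun t => continuous_apply _)
  have h1 : (fun (x : Fin 4 → ℝ) (a : ({i, j, k} : Finset (Fin 4))) => x a.1) '' T
      = ⇑ψ '' ((fun x : Fin 4 → ℝ => fun t : Fin 3 => x (e3 t).1) '' T) := by
    rw [Set.image_image]
    refine (Set.image_congr fun x _ => ?_).symm
    funext a
    rw [hψdef, MeasurableEquiv.coe_piCongrLeft, Equiv.piCongrLeft_apply,
      eq_rec_constant, e3.apply_symm_apply]
  have h2 : (fun x : Fin 4 → ℝ => ((x i : ℝ), fun t : Fin 2 => x (e3 t.succ).1)) '' T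
      = ⇑φ1 '' ((fun x : Fin 4 → ℝ => fun t : Fin 3 => x (e3 t).1) '' T) := by
    rw [Set.image_image]
    refine (Set.image_congr fun x _ => ?_).symm
    have h0 : (e3 0).1 = i := by simp [he3, tripleEquiv]
    have hcoe : ∀ fn : Fin 3 → ℝ, φ1 fn = (fn 0, fun t : Fin 2 => fn t.succ) := fun fn => rfl
    rw [hcoe]
    exact Prod.ext_iff.mpr ⟨by rw [h0], rfl⟩
  have h3 : (fun x : Fin 4 → ℝ => (x i, (x j, x k))) '' T
      = ⇑φ2 '' ((fun x : Fin 4 → ℝ => ((x i : ℝ), fun t : Fin 2 => x (e3 t.succ).1)) '' T) := by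
    rw [Set.image_image]
    refine (Set.image_congr fun x _ => ?_).symm
    have hj : (e3 (1 : Fin 3)).1 = j := by simp [he3, tripleEquiv]
    have hk : (e3 (2 : Fin 3)).1 = k := by simp [he3, tripleEquiv]
    exact Prod.ext_iff.mpr ⟨rfl, Prod.ext_iff.mpr
      ⟨show x (e3 1).1 = x j by rw [hj], show x (e3 2).1 = x k by rw [hk]⟩⟩
  rw [h1, h3, vol_image_eq ψ hψ hmid1M, vol_image_eq φ2 hφ2 hmid2M, h2,
    vol_image_eq φ1 hφ1 hmid1M]

lemma aux_ineq {a u v : ℝ≥0∞} (h1 : a ≤ u * v) (h2 : a ≤ 4) : a ≤ u + v := by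
  rcases eq_top_or_lt_top u with hu | hu
  · simp [hu]
  rcases eq_top_or_lt_top v with hv | hv
  · simp [hv]
  have ha : a ≠ ⊤ := (h2.trans_lt (by norm_num)).ne
  lift a to NNReal using ha
  lift u to NNReal using hu.ne
  lift v to NNReal using hv.ne
  rw [← ENNReal.coe_mul, ENNReal.coe_le_coe] at h1
  rw [← ENNReal.coe_add, ENNReal.coe_le_coe]
  have h2' : (a : ℝ) ≤ 4 := by exact_mod_cast h2
  rw [← NNReal.coe_le_coe] at h1 ⊢
  push_cast at h1 ⊢
  nlinarith [NNReal.coe_nonneg a, NNReal.coe_nonneg u, NNReal.coe_nonneg v,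
    sq_nonneg ((u : ℝ) - v), sq_nonneg ((u : ℝ) + v - a)]

lemma aux_two {u v : ℝ≥0∞} (h1 : u + v ≤ u * v) (h2 : u + v ≤ 4) : v = 0 ∨ v = 2 := by
  have hu : u ≠ ⊤ := (((le_add_right le_rfl).trans h2).trans_lt (by norm_num)).ne
  have hv : v ≠ ⊤ := (((le_add_left le_rfl).trans h2).trans_lt (by norm_num)).ne
  lift u to NNReal using hu
  lift v to NNReal using hv
  rw [← ENNReal.coe_add, ← ENNReal.coe_mul, ENNReal.coe_le_coe] at h1
  have h2' : ((u : ℝ) + v) ≤ 4 := by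
    have := h2
    rw [← ENNReal.coe_add] at this
    exact_mod_cast this
  rw [← NNReal.coe_le_coe] at h1
  push_cast at h1
  have hu0 : (0 : ℝ) ≤ u := NNReal.coe_nonneg u
  have hv0 : (0 : ℝ) ≤ v := NNReal.coe_nonneg v
  have hsq : ((u : ℝ) - v) ^ 2 ≤ 0 := by nlinarith
  have huv : (u : ℝ) = v := by nlinarith [sq_nonneg ((u : ℝ) - v)]
  have hcase : (v : ℝ) * ((v : ℝ) - 2) = 0 := by nlinarith
  rcases mul_eq_zero.mp hcase with h | h
  · left
    have : (v : NNReal) = 0 := by ext; exact h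
    simp [this]
  · right
    have : (v : ℝ) = 2 := by linarith
    have hv2 : (v : NNReal) = 2 := by ext; simpa using this
    rw [hv2]
    norm_num
/-- a.e. equality from an integral comparison. -/
lemma ae_eq_of_lintegral {α : Type*} [MeasurableSpace α] {μ : Measure α} {f g : α → ℝ≥0∞}
    (hf : Measurable f) (hg : Measurable g) (hle : ∀ x, f x ≤ g x)
    (hfin : ∫⁻ x, f x ∂μ ≠ ⊤) (hint : ∫⁻ x, g x ∂μ ≤ ∫⁻ x, f x ∂μ) :
    ∀ᵐ x ∂μ, g x = f x := by
  have hsub : ∫⁻ x, (g x - f x) ∂μ = ∫⁻ x, g x ∂μ - ∫⁻ x, f x ∂μ :=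
    lintegral_sub hf hfin (Filter.Eventually.of_forall hle)
  have h0 : ∫⁻ x, (g x - f x) ∂μ = 0 := by
    rw [hsub]
    exact tsub_eq_zero_iff_le.mpr hint
  have := (lintegral_eq_zero_iff (hg.sub hf)).mp h0
  filter_upwards [this] with x hx
  have : g x - f x = 0 := hx
  exact le_antisymm (tsub_eq_zero_iff_le.mp this) (hle x)

/-- The key equality-case analysis for the Loomis–Whitney inequality in ℝ³. -/
lemma key3 (T : Set (Fin 4 → ℝ)) (hT : IsCompact T) (c a b : Fin 4)
    (hca : a ≠ c) (hcb : b ≠ c) (hab : b ≠ a)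
    (hQ : volume ((fun x : Fin 4 → ℝ => (x c, x a)) '' T) = 1)
    (hP : volume ((fun x : Fin 4 → ℝ => (x c, x b)) '' T) = 1)
    (hD : volume ((fun x : Fin 4 → ℝ => (x a, x b)) '' T) = 4)
    (hK : volume ((fun x : Fin 4 → ℝ => (x c, (x a, x b))) '' T) = 2) :
    ∀ᵐ y : ℝ, volume (Prod.mk y ⁻¹' ((fun x : Fin 4 → ℝ => (x c, x b)) '' T))
      ∈ ({0, 2} : Set ℝ≥0∞) := by
  set K := (fun x : Fin 4 → ℝ => (x c, (x a, x b))) '' T with hKdef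
  set Q := (fun x : Fin 4 → ℝ => (x c, x a)) '' T with hQdef
  set Pb := (fun x : Fin 4 → ℝ => (x c, x b)) '' T with hPdef
  set D := (fun x : Fin 4 → ℝ => (x a, x b)) '' T with hDdef
  have mK : MeasurableSet K :=
    (hT.image (((continuous_apply c).prodMk
      ((continuous_apply a).prodMk (continuous_apply b))))).isClosed.measurableSet
  have mQ : MeasurableSet Q :=
    (hT.image ((continuous_apply c).prodMk (continuous_apply a))).isClosed.measurableSet
  have mPb : MeasurableSet Pb :=
    (hT.image ((continuous_apply c).prodMk (continuous_apply b))).isClosed.measurableSet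
  set f := fun y : ℝ => volume (Prod.mk y ⁻¹' K) with hfdef
  set g := fun y : ℝ => volume (Prod.mk y ⁻¹' Q) with hgdef
  set h := fun y : ℝ => volume (Prod.mk y ⁻¹' Pb) with hhdef
  have measf : Measurable f := measurable_measure_prodMk_left mK
  have measg : Measurable g := measurable_measure_prodMk_left mQ
  have meash : Measurable h := measurable_measure_prodMk_left mPb
  have intf : ∫⁻ y, f y = 2 := by
    rw [← hK, hKdef]
    rw [Measure.volume_eq_prod, Measure.prod_apply mK]
  have intg : ∫⁻ y, g y = 1 := by
    rw [← hQ, hQdef]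
    rw [Measure.volume_eq_prod, Measure.prod_apply mQ]
  have inth : ∫⁻ y, h y = 1 := by
    rw [← hP, hPdef]
    rw [Measure.volume_eq_prod, Measure.prod_apply mPb]
  have pt1 : ∀ y, f y ≤ g y * h y := by
    intro y
    have hsub : Prod.mk y ⁻¹' K ⊆ (Prod.mk y ⁻¹' Q) ×ˢ (Prod.mk y ⁻¹' Pb) := by
      rintro ⟨u, v⟩ ⟨x, hx, hxe⟩
      simp only [Prod.mk.injEq] at hxe
      constructor
      · exact ⟨x, hx, by simp [hxe.1, hxe.2.1]⟩
      · exact ⟨x, hx, by simp [hxe.1, hxe.2.2]⟩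
    calc f y ≤ volume ((Prod.mk y ⁻¹' Q) ×ˢ (Prod.mk y ⁻¹' Pb)) := measure_mono hsub
      _ = g y * h y := by rw [Measure.volume_eq_prod, Measure.prod_prod]
  have pt2 : ∀ y, f y ≤ 4 := by
    intro y
    have hsub : Prod.mk y ⁻¹' K ⊆ D := by
      rintro ⟨u, v⟩ ⟨x, hx, hxe⟩
      simp only [Prod.mk.injEq] at hxe
      exact ⟨x, hx, by simp [hxe.2.1, hxe.2.2]⟩
    calc f y ≤ volume D := measure_mono hsub
      _ = 4 := hD
  have pt3 : ∀ y, f y ≤ g y + h y := fun y => aux_ineq (pt1 y) (pt2 y)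
  have heq : ∀ᵐ y : ℝ, g y + h y = f y := by
    refine ae_eq_of_lintegral measf (measg.add meash) pt3 (by rw [intf]; norm_num) ?_
    rw [lintegral_add_left measg, intf, intg, inth]
    norm_num
  filter_upwards [heq] with y hy
  have h1 : g y + h y ≤ g y * h y := hy.le.trans (pt1 y)
  have h2 : g y + h y ≤ 4 := hy.le.trans (pt2 y)
  rcases aux_two h1 h2 with h0 | h2'
  · exact Or.inl h0
  · exact Or.inr h2'

lemma vol_of_projVol (T : Set (Fin 4 → ℝ)) (S : Finset (Fin 4)) (r : ℝ) (hr : 0 < r)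
    (h : projVol T S = r) :
    volume ((fun (x : Fin 4 → ℝ) (a : S) => x a.1) '' T) = ENNReal.ofReal r := by
  unfold projVol at h
  rcases eq_or_ne (volume ((fun (x : Fin 4 → ℝ) (a : S) => x a.1) '' T)) ⊤ with htop | htop
  · rw [htop] at h
    simp at h
    exact absurd h.symm hr.ne'
  · rw [← h, ENNReal.ofReal_toReal htop]

end helpers

/-- The Bollobás–Thomason non-constructible point (t = 2). -/
theorem stmt_3 :
    ¬ ∃ T : Set (Fin 4 → ℝ), IsCompact T ∧
      projVol T {0, 1} = 1 ∧ projVol T {1, 2} = 1 ∧ projVol T {2, 3} = 1 ∧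
      projVol T {0, 2} = 4 ∧ projVol T {1, 3} = 4 ∧
      projVol T {0, 1, 2} = 2 ∧ projVol T {1, 2, 3} = 2 := by
  rintro ⟨T, hT, h01, h12, h23, h02, h13, h012, h123⟩
  -- convert the projVol hypotheses into product-space volume statements
  have v10 : volume ((fun x : Fin 4 → ℝ => (x 1, x 0)) '' T) = 1 := by
    rw [← pair_volume T hT 1 0 (by decide)]
    have hs : ({1, 0} : Finset (Fin 4)) = {0, 1} := by decide
    rw [show (1 : ℝ≥0∞) = ENNReal.ofReal 1 by norm_num]
    exact vol_of_projVol T _ 1 one_pos (by rw [hs]; exact h01)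
  have v12 : volume ((fun x : Fin 4 → ℝ => (x 1, x 2)) '' T) = 1 := by
    rw [← pair_volume T hT 1 2 (by decide)]
    rw [show (1 : ℝ≥0∞) = ENNReal.ofReal 1 by norm_num]
    exact vol_of_projVol T _ 1 one_pos h12
  have v21 : volume ((fun x : Fin 4 → ℝ => (x 2, x 1)) '' T) = 1 := by
    rw [← pair_volume T hT 2 1 (by decide)]
    have hs : ({2, 1} : Finset (Fin 4)) = {1, 2} := by decide
    rw [show (1 : ℝ≥0∞) = ENNReal.ofReal 1 by norm_num]
    exact vol_of_projVol T _ 1 one_pos (by rw [hs]; exact h12)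
  have v23 : volume ((fun x : Fin 4 → ℝ => (x 2, x 3)) '' T) = 1 := by
    rw [← pair_volume T hT 2 3 (by decide)]
    rw [show (1 : ℝ≥0∞) = ENNReal.ofReal 1 by norm_num]
    exact vol_of_projVol T _ 1 one_pos h23
  have v02 : volume ((fun x : Fin 4 → ℝ => (x 0, x 2)) '' T) = 4 := by
    rw [← pair_volume T hT 0 2 (by decide)]
    rw [show (4 : ℝ≥0∞) = ENNReal.ofReal 4 by norm_num]
    exact vol_of_projVol T _ 4 (by norm_num) h02
  have v31 : volume ((fun x : Fin 4 → ℝ => (x 3, x 1)) '' T) = 4 := by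
    rw [← pair_volume T hT 3 1 (by decide)]
    have hs : ({3, 1} : Finset (Fin 4)) = {1, 3} := by decide
    rw [show (4 : ℝ≥0∞) = ENNReal.ofReal 4 by norm_num]
    exact vol_of_projVol T _ 4 (by norm_num) (by rw [hs]; exact h13)
  have v102 : volume ((fun x : Fin 4 → ℝ => (x 1, (x 0, x 2))) '' T) = 2 := by
    rw [← triple_volume T hT 1 0 2 (by decide) (by decide) (by decide)]
    have hs : ({1, 0, 2} : Finset (Fin 4)) = {0, 1, 2} := by decide
    rw [show (2 : ℝ≥0∞) = ENNReal.ofReal 2 by norm_num]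
    exact vol_of_projVol T _ 2 (by norm_num) (by rw [hs]; exact h012)
  have v231 : volume ((fun x : Fin 4 → ℝ => (x 2, (x 3, x 1))) '' T) = 2 := by
    rw [← triple_volume T hT 2 3 1 (by decide) (by decide) (by decide)]
    have hs : ({2, 3, 1} : Finset (Fin 4)) = {1, 2, 3} := by decide
    rw [show (2 : ℝ≥0∞) = ENNReal.ofReal 2 by norm_num]
    exact vol_of_projVol T _ 2 (by norm_num) (by rw [hs]; exact h123)
  -- the two key a.e. statements
  have keyP : ∀ᵐ y : ℝ, volume (Prod.mk y ⁻¹' ((fun x : Fin 4 → ℝ => (x 1, x 2)) '' T))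
      ∈ ({0, 2} : Set ℝ≥0∞) :=
    key3 T hT 1 0 2 (by decide) (by decide) (by decide) v10 v12 v02 v102
  have keyP' : ∀ᵐ z : ℝ, volume (Prod.mk z ⁻¹' ((fun x : Fin 4 → ℝ => (x 2, x 1)) '' T))
      ∈ ({0, 2} : Set ℝ≥0∞) :=
    key3 T hT 2 3 1 (by decide) (by decide) (by decide) v23 v21 v31 v231
  -- final 2D contradiction
  set P := (fun x : Fin 4 → ℝ => (x 1, x 2)) '' T with hPdef
  set P' := (fun x : Fin 4 → ℝ => (x 2, x 1)) '' T with hP'def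
  have mP : MeasurableSet P :=
    (hT.image ((continuous_apply 1).prodMk (continuous_apply 2))).isClosed.measurableSet
  have mP' : MeasurableSet P' :=
    (hT.image ((continuous_apply 2).prodMk (continuous_apply 1))).isClosed.measurableSet
  set F := fun y : ℝ => volume (Prod.mk y ⁻¹' P) with hFdef
  set G := fun z : ℝ => volume (Prod.mk z ⁻¹' P') with hGdef
  have measF : Measurable F := measurable_measure_prodMk_left mP
  have measG : Measurable G := measurable_measure_prodMk_left mP'
  have intF : ∫⁻ y, F y = 1 := by
    rw [← v12]
    rw [Measure.volume_eq_prod, Measure.prod_apply mP]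
  have intG : ∫⁻ z, G z = 1 := by
    rw [← v21]
    rw [Measure.volume_eq_prod, Measure.prod_apply mP']
  set B := {z : ℝ | G z ≠ 0} with hBdef
  have mB : MeasurableSet B := measG (measurableSet_singleton 0).compl
  have hBvol : volume B = 1 / 2 := by
    have hsplit : ∫⁻ z, G z = (∫⁻ z in B, G z) + ∫⁻ z in Bᶜ, G z :=
      (lintegral_add_compl _ mB).symm
    have hBc : ∫⁻ z in Bᶜ, G z = 0 := by
      have : ∀ z ∈ Bᶜ, G z = 0 := fun z hz => not_not.mp hz
      calc ∫⁻ z in Bᶜ, G z = ∫⁻ _ in Bᶜ, 0 := setLIntegral_congr_fun_ae mB.compl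
            (Filter.Eventually.of_forall this)
        _ = 0 := by simp
    have hBin : ∫⁻ z in B, G z = 2 * volume B := by
      have h2 : ∀ᵐ z : ℝ, z ∈ B → G z = 2 := by
        filter_upwards [keyP'] with z hz hzB
        rcases hz with h0 | h2
        · exact absurd h0 hzB
        · exact h2
      calc ∫⁻ z in B, G z = ∫⁻ _ in B, 2 := setLIntegral_congr_fun_ae mB h2
        _ = 2 * volume B := by rw [setLIntegral_const]
    have : (1 : ℝ≥0∞) = 2 * volume B := by
      rw [← intG, hsplit, hBc, hBin, add_zero]
    rw [ENNReal.eq_div_iff (by norm_num) (by norm_num)]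
    exact this.symm
  -- null part of P outside ℝ × B
  have hswapPre : Prod.swap ⁻¹' (P ∩ Set.univ ×ˢ Bᶜ) = P' ∩ Bᶜ ×ˢ Set.univ := by
    ext ⟨z, y⟩
    simp only [Set.mem_preimage, Prod.swap_prod_mk, Set.mem_inter_iff, Set.mem_prod,
      Set.mem_univ, true_and, and_true, hPdef, hP'def, Set.mem_image]
    constructor
    · rintro ⟨⟨x, hx, hxe⟩, hzB⟩
      refine ⟨⟨x, hx, ?_⟩, hzB⟩
      simp only [Prod.mk.injEq] at hxe ⊢
      exact ⟨hxe.2, hxe.1⟩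
    · rintro ⟨⟨x, hx, hxe⟩, hzB⟩
      refine ⟨⟨x, hx, ?_⟩, hzB⟩
      simp only [Prod.mk.injEq] at hxe ⊢
      exact ⟨hxe.2, hxe.1⟩
  have hnull : volume (P ∩ Set.univ ×ˢ Bᶜ) = 0 := by
    have hmeas : MeasurableSet (P ∩ Set.univ ×ˢ Bᶜ) :=
      mP.inter (MeasurableSet.univ.prod mB.compl)
    have hswapvol : volume (P ∩ Set.univ ×ˢ Bᶜ) = volume (P' ∩ Bᶜ ×ˢ Set.univ) := by
      rw [← hswapPre]
      exact ((Measure.measurePreserving_swap (μ := (volume : Measure ℝ))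
        (ν := (volume : Measure ℝ))).measure_preimage hmeas.nullMeasurableSet).symm
    rw [hswapvol, Measure.volume_eq_prod,
      Measure.prod_apply (mP'.inter (mB.compl.prod MeasurableSet.univ))]
    have hzero : ∀ z : ℝ, volume (Prod.mk z ⁻¹' (P' ∩ Bᶜ ×ˢ Set.univ)) = 0 := by
      intro z
      by_cases hz : z ∈ B
      · refine measure_mono_null ?_ (measure_empty (μ := volume))
        rintro w ⟨_, hw2⟩
        simp only [Set.mem_prod, Set.mem_univ, and_true] at hw2
        exact hw2 hz
      · refine measure_mono_null ?_ (not_not.mp hz)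
        rintro w ⟨hw1, _⟩
        exact hw1
    simp only [hzero, lintegral_zero]
  have haeslice : ∀ᵐ y : ℝ, volume (Prod.mk y ⁻¹' P ∩ Bᶜ) = 0 := by
    have hmeas : MeasurableSet (P ∩ Set.univ ×ˢ Bᶜ) :=
      mP.inter (MeasurableSet.univ.prod mB.compl)
    have : ∫⁻ y, volume (Prod.mk y ⁻¹' (P ∩ Set.univ ×ˢ Bᶜ)) = 0 := by
      rw [← Measure.prod_apply hmeas, ← Measure.volume_eq_prod]
      exact hnull
    have := (lintegral_eq_zero_iff (measurable_measure_prodMk_left hmeas)).mp this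
    filter_upwards [this] with y hy
    have hset : Prod.mk y ⁻¹' (P ∩ Set.univ ×ˢ Bᶜ) = Prod.mk y ⁻¹' P ∩ Bᶜ := by
      ext w
      simp [Set.mem_prod]
    rw [hset] at hy
    exact hy
  have hFsmall : ∀ᵐ y : ℝ, F y ≤ 1 / 2 := by
    filter_upwards [haeslice] with y hy
    have hsub : Prod.mk y ⁻¹' P ⊆ (Prod.mk y ⁻¹' P ∩ B) ∪ (Prod.mk y ⁻¹' P ∩ Bᶜ) := by
      intro w hw
      by_cases hwB : w ∈ B
      · exact Or.inl ⟨hw, hwB⟩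
      · exact Or.inr ⟨hw, hwB⟩
    calc F y ≤ volume ((Prod.mk y ⁻¹' P ∩ B) ∪ (Prod.mk y ⁻¹' P ∩ Bᶜ)) := measure_mono hsub
      _ ≤ volume (Prod.mk y ⁻¹' P ∩ B) + volume (Prod.mk y ⁻¹' P ∩ Bᶜ) := measure_union_le _ _
      _ ≤ volume B + 0 :=
          add_le_add (measure_mono Set.inter_subset_right) hy.le
      _ = 1 / 2 := by rw [add_zero, hBvol]
  have hFzero : ∀ᵐ y : ℝ, F y = 0 := by
    filter_upwards [keyP, hFsmall] with y hy hsmall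
    rcases hy with h0 | h2
    · exact h0
    · exfalso
      have h2' : F y = 2 := h2
      rw [h2'] at hsmall
      norm_num at hsmall
  have : (1 : ℝ≥0∞) = 0 := by
    rw [← intF]
    rw [lintegral_congr_ae hFzero]
    simp
  norm_num at this
end

section
/- The inequality |T_{{1,2}}|·|T_{{2,3}}|·|T_{{3,4}}| ≥ |T_{{1,2,3}}|·|T_{{2,3,4}}| fails for some compact set T ⊆ ℝ⁴; in fact, for every C > 0 there exists a compact T ⊆ ℝ⁴ with |T_{{1,2,3}}|·|T_{{2,3,4}}| > C·|T_{{1,2}}|·|T_{{2,3}}|·|T_{{3,4}}|. -/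
open MeasureTheory

open Set

def box {n : ℕ} (a : Fin n → ℝ) : Set (Fin n → ℝ) :=
  Set.pi Set.univ fun i => Icc 0 (a i)

lemma image_box {n : ℕ} (S : Finset (Fin n)) (a : Fin n → ℝ) (ha : ∀ i, 0 ≤ a i) :
    (fun (x : Fin n → ℝ) (i : S) => x i.1) '' box a
      = Set.pi Set.univ (fun i : S => Icc 0 (a i.1)) := by
  ext y
  constructor
  · rintro ⟨x, hx, rfl⟩ i _
    exact hx i.1 (mem_univ _)
  · intro hy
    refine ⟨fun i => if h : i ∈ S then y ⟨i, h⟩ else 0, ?_, ?_⟩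
    · intro i _
      by_cases h : i ∈ S
      · simpa [h] using hy ⟨i, h⟩ (mem_univ _)
      · simp [box, h, left_mem_Icc, ha i]
    · funext i
      simp [i.2]

lemma vol_image_box {n : ℕ} (S : Finset (Fin n)) (a : Fin n → ℝ) (ha : ∀ i, 0 ≤ a i) :
    volume ((fun (x : Fin n → ℝ) (i : S) => x i.1) '' box a)
      = ∏ i ∈ S, ENNReal.ofReal (a i) := by
  rw [image_box S a ha, volume_pi_pi]
  simp only [Real.volume_Icc, sub_zero]
  exact Finset.prod_coe_sort S fun i => ENNReal.ofReal (a i)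

lemma isCompact_box {n : ℕ} (a : Fin n → ℝ) : IsCompact (box a) :=
  isCompact_univ_pi fun _ => isCompact_Icc

lemma projVol_union_bounds {n : ℕ} (S : Finset (Fin n)) (a b : Fin n → ℝ)
    (ha : ∀ i, 0 ≤ a i) (hb : ∀ i, 0 ≤ b i) :
    (∏ i ∈ S, a i) ≤ projVol (box a ∪ box b) S ∧
      projVol (box a ∪ box b) S ≤ (∏ i ∈ S, a i) + ∏ i ∈ S, b i := by
  set p := fun (x : Fin n → ℝ) (i : S) => x i.1
  have him : p '' (box a ∪ box b) = p '' box a ∪ p '' box b := Set.image_union _ _ _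
  have hA : volume (p '' box a) = ∏ i ∈ S, ENNReal.ofReal (a i) := vol_image_box S a ha
  have hB : volume (p '' box b) = ∏ i ∈ S, ENNReal.ofReal (b i) := vol_image_box S b hb
  have hPa : (∏ i ∈ S, ENNReal.ofReal (a i)) ≠ ⊤ :=
    ENNReal.prod_ne_top fun i _ => ENNReal.ofReal_ne_top
  have hPb : (∏ i ∈ S, ENNReal.ofReal (b i)) ≠ ⊤ :=
    ENNReal.prod_ne_top fun i _ => ENNReal.ofReal_ne_top
  have hPab : (∏ i ∈ S, ENNReal.ofReal (a i)) + (∏ i ∈ S, ENNReal.ofReal (b i)) ≠ ⊤ :=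
    ENNReal.add_ne_top.mpr ⟨hPa, hPb⟩
  have hle : volume (p '' (box a ∪ box b)) ≤
      (∏ i ∈ S, ENNReal.ofReal (a i)) + ∏ i ∈ S, ENNReal.ofReal (b i) := by
    rw [him, ← hA, ← hB]
    exact measure_union_le _ _
  have hfin : volume (p '' (box a ∪ box b)) ≠ ⊤ :=
    ne_top_of_le_ne_top hPab hle
  have hge : (∏ i ∈ S, ENNReal.ofReal (a i)) ≤ volume (p '' (box a ∪ box b)) := by
    rw [him, ← hA]
    exact measure_mono (Set.subset_union_left)
  have htA : (∏ i ∈ S, ENNReal.ofReal (a i)).toReal = ∏ i ∈ S, a i := by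
    rw [ENNReal.toReal_prod]
    exact Finset.prod_congr rfl fun i _ => ENNReal.toReal_ofReal (ha i)
  have htB : (∏ i ∈ S, ENNReal.ofReal (b i)).toReal = ∏ i ∈ S, b i := by
    rw [ENNReal.toReal_prod]
    exact Finset.prod_congr rfl fun i _ => ENNReal.toReal_ofReal (hb i)
  constructor
  · calc (∏ i ∈ S, a i) = (∏ i ∈ S, ENNReal.ofReal (a i)).toReal := htA.symm
      _ ≤ _ := ENNReal.toReal_mono hfin hge
  · calc projVol (box a ∪ box b) S
        ≤ ((∏ i ∈ S, ENNReal.ofReal (a i)) + ∏ i ∈ S, ENNReal.ofReal (b i)).toReal :=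
          ENNReal.toReal_mono hPab hle
      _ = (∏ i ∈ S, a i) + ∏ i ∈ S, b i := by
          rw [ENNReal.toReal_add hPa hPb, htA, htB]

lemma projVol_nonneg {n : ℕ} (T : Set (Fin n → ℝ)) (S : Finset (Fin n)) :
    0 ≤ projVol T S := ENNReal.toReal_nonneg

lemma le_projVol_union_right {n : ℕ} (S : Finset (Fin n)) (a b : Fin n → ℝ)
    (ha : ∀ i, 0 ≤ a i) (hb : ∀ i, 0 ≤ b i) :
    (∏ i ∈ S, b i) ≤ projVol (box a ∪ box b) S := by
  rw [Set.union_comm]; exact (projVol_union_bounds S b a hb ha).1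

/-- The NC inequality |T₁₂||T₂₃||T₃₄| ≥ |T₁₂₃||T₂₃₄| fails, arbitrarily badly. -/
theorem stmt_5 : ∀ C : ℝ, 0 < C →
    ∃ T : Set (Fin 4 → ℝ), IsCompact T ∧
      C * (projVol T {0, 1} * projVol T {1, 2} * projVol T {2, 3}) <
        projVol T {0, 1, 2} * projVol T {1, 2, 3} := by
  intro C hC
  set M : ℝ := 8 * C + 1 with hMdef
  have hM0 : 0 < M := by positivity
  set v1 : Fin 4 → ℝ := ![M, 1, M, 1] with hv1def
  set v2 : Fin 4 → ℝ := ![1, M, 1, M] with hv2def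
  have hv1 : ∀ i, 0 ≤ v1 i := by
    intro i; fin_cases i <;> simp [hv1def] <;> linarith
  have hv2 : ∀ i, 0 ≤ v2 i := by
    intro i; fin_cases i <;> simp [hv2def] <;> linarith
  refine ⟨box v1 ∪ box v2, (isCompact_box v1).union (isCompact_box v2), ?_⟩
  set T := box v1 ∪ box v2 with hT
  have e12a : (∏ i ∈ ({0,1} : Finset (Fin 4)), v1 i) = M * 1 := by
    simp [hv1def, Finset.prod_insert]
  have e12b : (∏ i ∈ ({0,1} : Finset (Fin 4)), v2 i) = 1 * M := by
    simp [hv2def, Finset.prod_insert]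
  have e23a : (∏ i ∈ ({1,2} : Finset (Fin 4)), v1 i) = 1 * M := by
    simp [hv1def, Finset.prod_insert]
  have e23b : (∏ i ∈ ({1,2} : Finset (Fin 4)), v2 i) = M * 1 := by
    simp [hv2def, Finset.prod_insert]
  have e34a : (∏ i ∈ ({2,3} : Finset (Fin 4)), v1 i) = M * 1 := by
    simp [hv1def, Finset.prod_insert]
  have e34b : (∏ i ∈ ({2,3} : Finset (Fin 4)), v2 i) = 1 * M := by
    simp [hv2def, Finset.prod_insert]
  have e123 : (∏ i ∈ ({0,1,2} : Finset (Fin 4)), v1 i) = M * 1 * M := by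
    simp [hv1def, Finset.prod_insert]
  have e234 : (∏ i ∈ ({1,2,3} : Finset (Fin 4)), v2 i) = M * 1 * M := by
    simp [hv2def, Finset.prod_insert]
  have h12 : projVol T {0,1} ≤ 2 * M := by
    have := (projVol_union_bounds {0,1} v1 v2 hv1 hv2).2
    rw [e12a, e12b] at this; linarith
  have h23 : projVol T {1,2} ≤ 2 * M := by
    have := (projVol_union_bounds {1,2} v1 v2 hv1 hv2).2
    rw [e23a, e23b] at this; linarith
  have h34 : projVol T {2,3} ≤ 2 * M := by
    have := (projVol_union_bounds {2,3} v1 v2 hv1 hv2).2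
    rw [e34a, e34b] at this; linarith
  have h123 : M ^ 2 ≤ projVol T {0,1,2} := by
    have := (projVol_union_bounds {0,1,2} v1 v2 hv1 hv2).1
    rw [e123] at this; nlinarith
  have h234 : M ^ 2 ≤ projVol T {1,2,3} := by
    have := le_projVol_union_right {1,2,3} v1 v2 hv1 hv2
    rw [e234] at this; nlinarith
  have n12 := projVol_nonneg T ({0,1} : Finset (Fin 4))
  have n23 := projVol_nonneg T ({1,2} : Finset (Fin 4))
  have n34 := projVol_nonneg T ({2,3} : Finset (Fin 4))
  have n123 := projVol_nonneg T ({0,1,2} : Finset (Fin 4))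
  have habc : projVol T {0,1} * projVol T {1,2} * projVol T {2,3} ≤ 2*M * (2*M) * (2*M) := by
    have hab : projVol T {0,1} * projVol T {1,2} ≤ 2*M * (2*M) :=
      mul_le_mul h12 h23 n23 (by positivity)
    exact mul_le_mul hab h34 n34 (by positivity)
  have hbig : M ^ 2 * M ^ 2 ≤ projVol T {0,1,2} * projVol T {1,2,3} :=
    mul_le_mul h123 h234 (by positivity) (le_trans (by positivity) h123)
  have hCstep : C * (projVol T {0,1} * projVol T {1,2} * projVol T {2,3})
      ≤ C * (2*M * (2*M) * (2*M)) := by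
    exact mul_le_mul_of_nonneg_left habc hC.le
  have hfin : C * (2*M * (2*M) * (2*M)) < M ^ 2 * M ^ 2 := by nlinarith [pow_pos hM0 3]
  linarith
end

section
/- The inequality |T_{{1,3}}|·|T_{{2,3}}|·|T_{{1,2,4}}| ≥ |T_{{1,2,3}}|·|T_{{1,2,3,4}}| fails for some compact set T ⊆ ℝ⁴. -/
open MeasureTheory

lemma image_pi_restrict {n : ℕ} (S : Finset (Fin n)) (t : Fin n → Set ℝ)
    (ht : ∀ i, (t i).Nonempty) :
    (fun (x : Fin n → ℝ) (i : S) => x i.1) '' (Set.pi Set.univ t)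
      = Set.pi Set.univ (fun i : S => t i.1) := by
  ext y
  constructor
  · rintro ⟨x, hx, rfl⟩ i _
    exact hx i.1 (Set.mem_univ _)
  · intro hy
    refine ⟨fun i => if h : i ∈ S then y ⟨i, h⟩ else (ht i).some, fun i _ => ?_, ?_⟩
    · by_cases h : i ∈ S
      · simpa [h] using hy ⟨i, h⟩ (Set.mem_univ _)
      · simpa [h] using (ht i).some_mem
    · funext i
      simp [i.2]

noncomputable def cvec : Fin 4 → ℝ := ![1/6, 1/6, 6, 36]

lemma cvec_pos : ∀ i, 0 < cvec i := by
  intro i; fin_cases i <;> norm_num [cvec]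

noncomputable def Tset : Set (Fin 4 → ℝ) :=
  Set.pi Set.univ (fun _ => Set.Icc (0:ℝ) 1) ∪
    Set.pi Set.univ (fun i => Set.Icc 2 (2 + cvec i))

lemma projVol_Tset (S : Finset (Fin 4)) (hS : S.Nonempty) :
    projVol Tset S = 1 + ∏ i ∈ S, cvec i := by
  obtain ⟨i0, hi0⟩ := hS
  have h1 : ∀ i : Fin 4, (Set.Icc (0:ℝ) 1).Nonempty := fun _ => ⟨0, by norm_num⟩
  have h2 : ∀ i : Fin 4, (Set.Icc (2:ℝ) (2 + cvec i)).Nonempty :=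
    fun i => ⟨2, by constructor <;> nlinarith [cvec_pos i]⟩
  rw [projVol, Tset, Set.image_union, image_pi_restrict S _ h1,
    image_pi_restrict S _ (fun i => h2 i)]
  rw [measure_union ?hd ?hm]
  case hd =>
    rw [Set.disjoint_iff_inter_eq_empty, ← Set.pi_inter_distrib]
    apply Set.univ_pi_eq_empty (i := ⟨i0, hi0⟩)
    rw [Set.Icc_inter_Icc]
    apply Set.Icc_eq_empty
    simp only [not_le, lt_min_iff, max_lt_iff]
    norm_num
  case hm => exact MeasurableSet.univ_pi fun i => measurableSet_Icc
  rw [volume_pi_pi, volume_pi_pi]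
  simp only [Real.volume_Icc, sub_zero, add_sub_cancel_left]
  rw [ENNReal.toReal_add]
  · congr 1
    · simp [ENNReal.toReal_prod]
    · rw [Finset.univ_eq_attach, ← ENNReal.ofReal_prod_of_nonneg
        (fun i _ => (cvec_pos i.1).le)]
      rw [ENNReal.toReal_ofReal (Finset.prod_nonneg fun i _ => (cvec_pos i.1).le)]
      exact Finset.prod_attach S cvec
  · exact ENNReal.prod_ne_top fun i _ => by simp
  · exact ENNReal.prod_ne_top fun i _ => by simp

/-- The NC inequality |T₁₃||T₂₃||T₁₂₄| ≥ |T₁₂₃||T₁₂₃₄| fails. -/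
theorem stmt_8 :
    ∃ T : Set (Fin 4 → ℝ), IsCompact T ∧
      projVol T {0, 2} * projVol T {1, 2} * projVol T {0, 1, 3} <
        projVol T {0, 1, 2} * projVol T {0, 1, 2, 3} := by
  refine ⟨Tset, ?_, ?_⟩
  · rw [Tset]
    apply IsCompact.union
    · rw [show (Set.pi Set.univ (fun _ : Fin 4 => Set.Icc (0:ℝ) 1)) =
        Set.Icc (fun _ => 0) (fun _ => 1) from Set.pi_univ_Icc _ _]
      exact isCompact_Icc
    · rw [show (Set.pi Set.univ (fun i : Fin 4 => Set.Icc (2:ℝ) (2 + cvec i))) =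
        Set.Icc (fun _ => 2) (fun i => 2 + cvec i) from Set.pi_univ_Icc _ _]
      exact isCompact_Icc
  · rw [projVol_Tset _ ⟨0, by decide⟩, projVol_Tset _ ⟨1, by decide⟩,
      projVol_Tset _ ⟨0, by decide⟩, projVol_Tset _ ⟨0, by decide⟩,
      projVol_Tset _ ⟨0, by decide⟩]
    simp only [Finset.prod_insert, Finset.mem_insert, Finset.mem_singleton,
      Finset.prod_singleton, Fin.reduceEq, not_false_eq_true, or_self, or_false, false_or]
    have e0 : cvec 0 = 1/6 := rfl
    have e1 : cvec 1 = 1/6 := rfl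
    have e2 : cvec 2 = 6 := rfl
    have e3 : cvec 3 = 36 := rfl
    norm_num [e0, e1, e2, e3]
end

section
/- The inequality |T_{{1}}|·|T_{{1,2}}|·|T_{{2,3}}|·|T_{{3,4}}|·|T_{{2,4}}| ≥ |T_{{1,2,3}}|·|T_{{2,3,4}}|·|T_{{1,2,4}}| fails for some compact set T ⊆ ℝ⁴. -/
open MeasureTheory

namespace Stmt9Aux

open Set

attribute [local simp] Matrix.cons_val_two Matrix.cons_val_three

/-- A coordinate box in the projected space. -/
def bx (S : Finset (Fin 4)) (A B : Fin 4 → ℝ) : Set ({x // x ∈ S} → ℝ) :=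
  Set.univ.pi fun i => Set.Icc (A i.1) (B i.1)

lemma measurableSet_bx (S : Finset (Fin 4)) (A B : Fin 4 → ℝ) : MeasurableSet (bx S A B) :=
  MeasurableSet.univ_pi fun _ => measurableSet_Icc

lemma vol_bx (S : Finset (Fin 4)) (A B : Fin 4 → ℝ) :
    volume (bx S A B) = ∏ i ∈ S, ENNReal.ofReal (B i - A i) := by
  unfold bx
  rw [volume_pi_pi]
  simp only [Real.volume_Icc]
  exact Finset.prod_coe_sort S (fun i => ENNReal.ofReal (B i - A i))

lemma image_bx (S : Finset (Fin 4)) (A B : Fin 4 → ℝ) (h : ∀ i, A i ≤ B i) :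
    (fun (x : Fin 4 → ℝ) (i : S) => x i.1) '' (Set.univ.pi fun i => Set.Icc (A i) (B i))
      = bx S A B := by
  ext y
  constructor
  · rintro ⟨x, hx, rfl⟩
    exact fun i _ => hx i.1 (Set.mem_univ _)
  · intro hy
    refine ⟨fun i => if hi : i ∈ S then y ⟨i, hi⟩ else A i, fun i _ => ?_, ?_⟩
    · by_cases hi : i ∈ S
      · simpa [hi] using hy ⟨i, hi⟩ (Set.mem_univ _)
      · simp [hi, Set.mem_Icc, le_refl, h i]
    · funext i
      simp [i.2]

lemma bx_subset (S : Finset (Fin 4)) {A B A' B' : Fin 4 → ℝ}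
    (h : ∀ i ∈ S, A' i ≤ A i ∧ B i ≤ B' i) : bx S A B ⊆ bx S A' B' := by
  intro x hx i _
  have h1 := hx i (Set.mem_univ _)
  rw [Set.mem_Icc] at h1 ⊢
  exact ⟨(h i.1 i.2).1.trans h1.1, h1.2.trans (h i.1 i.2).2⟩

lemma bx_inter (S : Finset (Fin 4)) {A B A' B' A'' B'' : Fin 4 → ℝ}
    (h : ∀ i ∈ S, Set.Icc (A i) (B i) ∩ Set.Icc (A' i) (B' i) = Set.Icc (A'' i) (B'' i)) :
    bx S A B ∩ bx S A' B' = bx S A'' B'' := by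
  ext x
  simp only [bx, Set.mem_inter_iff, Set.mem_univ_pi]
  constructor
  · rintro ⟨h1, h2⟩ i
    exact (Set.ext_iff.mp (h i.1 i.2) (x i)).mp ⟨h1 i, h2 i⟩
  · intro hx
    exact ⟨fun i => ((Set.ext_iff.mp (h i.1 i.2) (x i)).mpr (hx i)).1,
           fun i => ((Set.ext_iff.mp (h i.1 i.2) (x i)).mpr (hx i)).2⟩

lemma vol_union {α : Type*} [MeasureSpace α] {s t : Set α} (ht : MeasurableSet t)
    {v c : ENNReal} (hc : c ≠ ⊤) (hint : volume (s ∩ t) = c)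
    (hst : volume s + volume t = v + c) : volume (s ∪ t) = v := by
  have h := measure_union_add_inter (μ := volume) s ht
  rw [hint] at h
  exact WithTop.add_right_cancel hc (h.trans hst)

noncomputable section

def a1 : Fin 4 → ℝ := ![0, 0, 0, 0]
def b1 : Fin 4 → ℝ := ![100, 1, 1, 10000]
def a2 : Fin 4 → ℝ := ![0, 0, 1, 0]
def b2 : Fin 4 → ℝ := ![100, 1, 10001, 1]
def a3 : Fin 4 → ℝ := ![0, 0, 10001, 0]
def b3 : Fin 4 → ℝ := ![1, 5, 10101, 100]

def T : Set (Fin 4 → ℝ) :=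
  (Set.univ.pi fun i => Set.Icc (a1 i) (b1 i)) ∪
  (Set.univ.pi fun i => Set.Icc (a2 i) (b2 i)) ∪
  (Set.univ.pi fun i => Set.Icc (a3 i) (b3 i))

lemma hab1 : ∀ i, a1 i ≤ b1 i := by
  intro i; fin_cases i <;> norm_num [a1, b1]

lemma hab2 : ∀ i, a2 i ≤ b2 i := by
  intro i; fin_cases i <;> norm_num [a2, b2]

lemma hab3 : ∀ i, a3 i ≤ b3 i := by
  intro i; fin_cases i <;> norm_num [a3, b3]

lemma compact_T : IsCompact T := by
  unfold T
  rw [Set.pi_univ_Icc, Set.pi_univ_Icc, Set.pi_univ_Icc]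
  exact (isCompact_Icc.union isCompact_Icc).union isCompact_Icc

lemma image_T (S : Finset (Fin 4)) :
    (fun (x : Fin 4 → ℝ) (i : S) => x i.1) '' T
      = (bx S a1 b1 ∪ bx S a2 b2) ∪ bx S a3 b3 := by
  unfold T
  rw [Set.image_union, Set.image_union, image_bx S a1 b1 hab1, image_bx S a2 b2 hab2,
    image_bx S a3 b3 hab3]

lemma volS12 :
    volume ((bx ({1, 2} : Finset (Fin 4)) a1 b1 ∪ bx {1, 2} a2 b2) ∪ bx {1, 2} a3 b3) = 10501 := by
  have h12 : volume (bx ({1, 2} : Finset (Fin 4)) a1 b1 ∩ bx {1, 2} a2 b2) = 0 := by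
    rw [bx_inter _ (A'' := ![0, 0, 1, 0]) (B'' := ![0, 1, 1, 0])
        (by intro i hi; fin_cases hi <;>
          (rw [Set.Icc_inter_Icc]; norm_num [a1, b1, a2, b2, max_def, min_def])),
      vol_bx, Finset.prod_insert (by decide), Finset.prod_singleton]
    norm_num
  have h13 : volume (bx ({1, 2} : Finset (Fin 4)) a1 b1 ∩ bx {1, 2} a3 b3) = 0 := by
    rw [bx_inter _ (A'' := ![0, 0, 10001, 0]) (B'' := ![0, 1, 1, 0])
        (by intro i hi; fin_cases hi <;>
          (rw [Set.Icc_inter_Icc]; norm_num [a1, b1, a3, b3, max_def, min_def])),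
      vol_bx, Finset.prod_insert (by decide), Finset.prod_singleton]
    norm_num
  have h23 : volume (bx ({1, 2} : Finset (Fin 4)) a2 b2 ∩ bx {1, 2} a3 b3) = 0 := by
    rw [bx_inter _ (A'' := ![0, 0, 10001, 0]) (B'' := ![0, 1, 10001, 0])
        (by intro i hi; fin_cases hi <;>
          (rw [Set.Icc_inter_Icc]; norm_num [a2, b2, a3, b3, max_def, min_def])),
      vol_bx, Finset.prod_insert (by decide), Finset.prod_singleton]
    norm_num
  have hU : volume (bx ({1, 2} : Finset (Fin 4)) a1 b1 ∪ bx {1, 2} a2 b2) = 10001 :=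
    vol_union (measurableSet_bx _ _ _) (by norm_num) h12 (by
      rw [vol_bx, vol_bx, Finset.prod_insert (by decide), Finset.prod_singleton, Finset.prod_insert (by decide), Finset.prod_singleton]
      norm_num [a1, b1, a2, b2])
  have hI : volume ((bx ({1, 2} : Finset (Fin 4)) a1 b1 ∪ bx {1, 2} a2 b2) ∩ bx {1, 2} a3 b3) = 0 := by
    rw [Set.union_inter_distrib_right]
    exact measure_union_null h13 h23
  refine vol_union (measurableSet_bx _ _ _) (by norm_num) hI ?_
  rw [hU, vol_bx, Finset.prod_insert (by decide), Finset.prod_singleton]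
  norm_num [a3, b3]

lemma volS23 :
    volume ((bx ({2, 3} : Finset (Fin 4)) a1 b1 ∪ bx {2, 3} a2 b2) ∪ bx {2, 3} a3 b3) = 30000 := by
  have h12 : volume (bx ({2, 3} : Finset (Fin 4)) a1 b1 ∩ bx {2, 3} a2 b2) = 0 := by
    rw [bx_inter _ (A'' := ![0, 0, 1, 0]) (B'' := ![0, 0, 1, 1])
        (by intro i hi; fin_cases hi <;>
          (rw [Set.Icc_inter_Icc]; norm_num [a1, b1, a2, b2, max_def, min_def])),
      vol_bx, Finset.prod_insert (by decide), Finset.prod_singleton]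
    norm_num
  have h13 : volume (bx ({2, 3} : Finset (Fin 4)) a1 b1 ∩ bx {2, 3} a3 b3) = 0 := by
    rw [bx_inter _ (A'' := ![0, 0, 10001, 0]) (B'' := ![0, 0, 1, 100])
        (by intro i hi; fin_cases hi <;>
          (rw [Set.Icc_inter_Icc]; norm_num [a1, b1, a3, b3, max_def, min_def])),
      vol_bx, Finset.prod_insert (by decide), Finset.prod_singleton]
    norm_num
  have h23 : volume (bx ({2, 3} : Finset (Fin 4)) a2 b2 ∩ bx {2, 3} a3 b3) = 0 := by
    rw [bx_inter _ (A'' := ![0, 0, 10001, 0]) (B'' := ![0, 0, 10001, 1])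
        (by intro i hi; fin_cases hi <;>
          (rw [Set.Icc_inter_Icc]; norm_num [a2, b2, a3, b3, max_def, min_def])),
      vol_bx, Finset.prod_insert (by decide), Finset.prod_singleton]
    norm_num
  have hU : volume (bx ({2, 3} : Finset (Fin 4)) a1 b1 ∪ bx {2, 3} a2 b2) = 20000 :=
    vol_union (measurableSet_bx _ _ _) (by norm_num) h12 (by
      rw [vol_bx, vol_bx, Finset.prod_insert (by decide), Finset.prod_singleton, Finset.prod_insert (by decide), Finset.prod_singleton]
      norm_num [a1, b1, a2, b2])
  have hI : volume ((bx ({2, 3} : Finset (Fin 4)) a1 b1 ∪ bx {2, 3} a2 b2) ∩ bx {2, 3} a3 b3) = 0 := by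
    rw [Set.union_inter_distrib_right]
    exact measure_union_null h13 h23
  refine vol_union (measurableSet_bx _ _ _) (by norm_num) hI ?_
  rw [hU, vol_bx, Finset.prod_insert (by decide), Finset.prod_singleton]
  norm_num [a3, b3]

lemma volS012 :
    volume ((bx ({0, 1, 2} : Finset (Fin 4)) a1 b1 ∪ bx {0, 1, 2} a2 b2) ∪ bx {0, 1, 2} a3 b3) = 1000600 := by
  have h12 : volume (bx ({0, 1, 2} : Finset (Fin 4)) a1 b1 ∩ bx {0, 1, 2} a2 b2) = 0 := by
    rw [bx_inter _ (A'' := ![0, 0, 1, 0]) (B'' := ![100, 1, 1, 0])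
        (by intro i hi; fin_cases hi <;>
          (rw [Set.Icc_inter_Icc]; norm_num [a1, b1, a2, b2, max_def, min_def])),
      vol_bx, Finset.prod_insert (by decide), Finset.prod_insert (by decide), Finset.prod_singleton]
    norm_num
  have h13 : volume (bx ({0, 1, 2} : Finset (Fin 4)) a1 b1 ∩ bx {0, 1, 2} a3 b3) = 0 := by
    rw [bx_inter _ (A'' := ![0, 0, 10001, 0]) (B'' := ![1, 1, 1, 0])
        (by intro i hi; fin_cases hi <;>
          (rw [Set.Icc_inter_Icc]; norm_num [a1, b1, a3, b3, max_def, min_def])),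
      vol_bx, Finset.prod_insert (by decide), Finset.prod_insert (by decide), Finset.prod_singleton]
    norm_num
  have h23 : volume (bx ({0, 1, 2} : Finset (Fin 4)) a2 b2 ∩ bx {0, 1, 2} a3 b3) = 0 := by
    rw [bx_inter _ (A'' := ![0, 0, 10001, 0]) (B'' := ![1, 1, 10001, 0])
        (by intro i hi; fin_cases hi <;>
          (rw [Set.Icc_inter_Icc]; norm_num [a2, b2, a3, b3, max_def, min_def])),
      vol_bx, Finset.prod_insert (by decide), Finset.prod_insert (by decide), Finset.prod_singleton]
    norm_num
  have hU : volume (bx ({0, 1, 2} : Finset (Fin 4)) a1 b1 ∪ bx {0, 1, 2} a2 b2) = 1000100 :=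
    vol_union (measurableSet_bx _ _ _) (by norm_num) h12 (by
      rw [vol_bx, vol_bx, Finset.prod_insert (by decide), Finset.prod_insert (by decide), Finset.prod_singleton, Finset.prod_insert (by decide), Finset.prod_insert (by decide), Finset.prod_singleton]
      norm_num [a1, b1, a2, b2])
  have hI : volume ((bx ({0, 1, 2} : Finset (Fin 4)) a1 b1 ∪ bx {0, 1, 2} a2 b2) ∩ bx {0, 1, 2} a3 b3) = 0 := by
    rw [Set.union_inter_distrib_right]
    exact measure_union_null h13 h23
  refine vol_union (measurableSet_bx _ _ _) (by norm_num) hI ?_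
  rw [hU, vol_bx, Finset.prod_insert (by decide), Finset.prod_insert (by decide), Finset.prod_singleton]
  norm_num [a3, b3]

lemma volS123 :
    volume ((bx ({1, 2, 3} : Finset (Fin 4)) a1 b1 ∪ bx {1, 2, 3} a2 b2) ∪ bx {1, 2, 3} a3 b3) = 70000 := by
  have h12 : volume (bx ({1, 2, 3} : Finset (Fin 4)) a1 b1 ∩ bx {1, 2, 3} a2 b2) = 0 := by
    rw [bx_inter _ (A'' := ![0, 0, 1, 0]) (B'' := ![0, 1, 1, 1])
        (by intro i hi; fin_cases hi <;>
          (rw [Set.Icc_inter_Icc]; norm_num [a1, b1, a2, b2, max_def, min_def])),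
      vol_bx, Finset.prod_insert (by decide), Finset.prod_insert (by decide), Finset.prod_singleton]
    norm_num
  have h13 : volume (bx ({1, 2, 3} : Finset (Fin 4)) a1 b1 ∩ bx {1, 2, 3} a3 b3) = 0 := by
    rw [bx_inter _ (A'' := ![0, 0, 10001, 0]) (B'' := ![0, 1, 1, 100])
        (by intro i hi; fin_cases hi <;>
          (rw [Set.Icc_inter_Icc]; norm_num [a1, b1, a3, b3, max_def, min_def])),
      vol_bx, Finset.prod_insert (by decide), Finset.prod_insert (by decide), Finset.prod_singleton]
    norm_num
  have h23 : volume (bx ({1, 2, 3} : Finset (Fin 4)) a2 b2 ∩ bx {1, 2, 3} a3 b3) = 0 := by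
    rw [bx_inter _ (A'' := ![0, 0, 10001, 0]) (B'' := ![0, 1, 10001, 1])
        (by intro i hi; fin_cases hi <;>
          (rw [Set.Icc_inter_Icc]; norm_num [a2, b2, a3, b3, max_def, min_def])),
      vol_bx, Finset.prod_insert (by decide), Finset.prod_insert (by decide), Finset.prod_singleton]
    norm_num
  have hU : volume (bx ({1, 2, 3} : Finset (Fin 4)) a1 b1 ∪ bx {1, 2, 3} a2 b2) = 20000 :=
    vol_union (measurableSet_bx _ _ _) (by norm_num) h12 (by
      rw [vol_bx, vol_bx, Finset.prod_insert (by decide), Finset.prod_insert (by decide), Finset.prod_singleton, Finset.prod_insert (by decide), Finset.prod_insert (by decide), Finset.prod_singleton]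
      norm_num [a1, b1, a2, b2])
  have hI : volume ((bx ({1, 2, 3} : Finset (Fin 4)) a1 b1 ∪ bx {1, 2, 3} a2 b2) ∩ bx {1, 2, 3} a3 b3) = 0 := by
    rw [Set.union_inter_distrib_right]
    exact measure_union_null h13 h23
  refine vol_union (measurableSet_bx _ _ _) (by norm_num) hI ?_
  rw [hU, vol_bx, Finset.prod_insert (by decide), Finset.prod_insert (by decide), Finset.prod_singleton]
  norm_num [a3, b3]

lemma volS0 :
    volume ((bx ({0} : Finset (Fin 4)) a1 b1 ∪ bx {0} a2 b2) ∪ bx {0} a3 b3) = 100 := by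
  have h21 : bx ({0} : Finset (Fin 4)) a2 b2 ⊆ bx {0} a1 b1 :=
    bx_subset _ (by intro i hi; fin_cases hi <;> norm_num [a1, b1, a2, b2])
  have h31 : bx ({0} : Finset (Fin 4)) a3 b3 ⊆ bx {0} a1 b1 :=
    bx_subset _ (by intro i hi; fin_cases hi <;> norm_num [a1, b1, a3, b3])
  rw [Set.union_eq_left.mpr h21, Set.union_eq_left.mpr h31, vol_bx, Finset.prod_singleton]
  norm_num [a1, b1]

lemma volS01 :
    volume ((bx ({0, 1} : Finset (Fin 4)) a1 b1 ∪ bx {0, 1} a2 b2) ∪ bx {0, 1} a3 b3) = 104 := by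
  have h21 : bx ({0, 1} : Finset (Fin 4)) a2 b2 ⊆ bx {0, 1} a1 b1 :=
    bx_subset _ (by intro i hi; fin_cases hi <;> norm_num [a1, b1, a2, b2])
  have h13 : volume (bx ({0, 1} : Finset (Fin 4)) a1 b1 ∩ bx {0, 1} a3 b3) = 1 := by
    rw [bx_inter _ (A'' := ![0, 0, 0, 0]) (B'' := ![1, 1, 0, 0])
        (by intro i hi; fin_cases hi <;>
          (rw [Set.Icc_inter_Icc]; norm_num [a1, b1, a3, b3, max_def, min_def])),
      vol_bx, Finset.prod_insert (by decide), Finset.prod_singleton]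
    norm_num
  rw [Set.union_eq_left.mpr h21]
  refine vol_union (measurableSet_bx _ _ _) (by norm_num) h13 ?_
  rw [vol_bx, vol_bx, Finset.prod_insert (by decide), Finset.prod_singleton, Finset.prod_insert (by decide), Finset.prod_singleton]
  norm_num [a1, b1, a3, b3]

lemma volS13 :
    volume ((bx ({1, 3} : Finset (Fin 4)) a1 b1 ∪ bx {1, 3} a2 b2) ∪ bx {1, 3} a3 b3) = 10400 := by
  have h21 : bx ({1, 3} : Finset (Fin 4)) a2 b2 ⊆ bx {1, 3} a1 b1 :=
    bx_subset _ (by intro i hi; fin_cases hi <;> norm_num [a1, b1, a2, b2])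
  have h13 : volume (bx ({1, 3} : Finset (Fin 4)) a1 b1 ∩ bx {1, 3} a3 b3) = 100 := by
    rw [bx_inter _ (A'' := ![0, 0, 0, 0]) (B'' := ![0, 1, 0, 100])
        (by intro i hi; fin_cases hi <;>
          (rw [Set.Icc_inter_Icc]; norm_num [a1, b1, a3, b3, max_def, min_def])),
      vol_bx, Finset.prod_insert (by decide), Finset.prod_singleton]
    norm_num
  rw [Set.union_eq_left.mpr h21]
  refine vol_union (measurableSet_bx _ _ _) (by norm_num) h13 ?_
  rw [vol_bx, vol_bx, Finset.prod_insert (by decide), Finset.prod_singleton, Finset.prod_insert (by decide), Finset.prod_singleton]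
  norm_num [a1, b1, a3, b3]

lemma volS013 :
    volume ((bx ({0, 1, 3} : Finset (Fin 4)) a1 b1 ∪ bx {0, 1, 3} a2 b2) ∪ bx {0, 1, 3} a3 b3) = 1000400 := by
  have h21 : bx ({0, 1, 3} : Finset (Fin 4)) a2 b2 ⊆ bx {0, 1, 3} a1 b1 :=
    bx_subset _ (by intro i hi; fin_cases hi <;> norm_num [a1, b1, a2, b2])
  have h13 : volume (bx ({0, 1, 3} : Finset (Fin 4)) a1 b1 ∩ bx {0, 1, 3} a3 b3) = 100 := by
    rw [bx_inter _ (A'' := ![0, 0, 0, 0]) (B'' := ![1, 1, 0, 100])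
        (by intro i hi; fin_cases hi <;>
          (rw [Set.Icc_inter_Icc]; norm_num [a1, b1, a3, b3, max_def, min_def])),
      vol_bx, Finset.prod_insert (by decide), Finset.prod_insert (by decide), Finset.prod_singleton]
    norm_num
  rw [Set.union_eq_left.mpr h21]
  refine vol_union (measurableSet_bx _ _ _) (by norm_num) h13 ?_
  rw [vol_bx, vol_bx, Finset.prod_insert (by decide), Finset.prod_insert (by decide), Finset.prod_singleton, Finset.prod_insert (by decide), Finset.prod_insert (by decide), Finset.prod_singleton]
  norm_num [a1, b1, a3, b3]

end

end Stmt9Aux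

/-- The NC inequality |T₁||T₁₂||T₂₃||T₃₄||T₂₄| ≥ |T₁₂₃||T₂₃₄||T₁₂₄| fails. -/
theorem stmt_9 :
    ∃ T : Set (Fin 4 → ℝ), IsCompact T ∧
      projVol T {0} * projVol T {0, 1} * projVol T {1, 2} * projVol T {2, 3} *
          projVol T {1, 3} <
        projVol T {0, 1, 2} * projVol T {1, 2, 3} * projVol T {0, 1, 3} := by
  refine ⟨Stmt9Aux.T, Stmt9Aux.compact_T, ?_⟩
  simp only [projVol]
  rw [Stmt9Aux.image_T {0}, Stmt9Aux.image_T {0, 1}, Stmt9Aux.image_T {1, 2},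
    Stmt9Aux.image_T {2, 3}, Stmt9Aux.image_T {1, 3}, Stmt9Aux.image_T {0, 1, 2},
    Stmt9Aux.image_T {1, 2, 3}, Stmt9Aux.image_T {0, 1, 3},
    Stmt9Aux.volS0, Stmt9Aux.volS01, Stmt9Aux.volS12, Stmt9Aux.volS23, Stmt9Aux.volS13,
    Stmt9Aux.volS012, Stmt9Aux.volS123, Stmt9Aux.volS013]
  norm_num
end

section
/- (Exact Single Cover necessary condition) Suppose α₁,…,α_k > 0, β₁,…,β_m > 0 and subsets A₁,…,A_k, B₁,…,B_m of [n] are such that ∏_{i=1}^{k} |T_{A_i}|^{α_i} ≥ ∏_{j=1}^{m} |T_{B_j}|^{β_j} holds for every compact T ⊆ ℝⁿ with all projection volumes positive. Then for each j ∈ [m] there exist reals c₁,…,c_k with 0 ≤ c_i ≤ α_i for all i and ∑_{i=1}^{k} c_i·𝟙_{A_i} = β_j·𝟙_{B_j}, where 𝟙_S ∈ ℝⁿ is the 0/1 indicator vector of S. -/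
open MeasureTheory

section aux

open Set

variable {n : ℕ}

lemma aux_box_vol (a : Fin n → ℝ) (ha : ∀ i, 0 ≤ a i) (S : Finset (Fin n)) :
    volume (Set.pi Set.univ (fun i : S => Set.Icc (0:ℝ) (a i.1))) =
      ENNReal.ofReal (∏ i : S, a i.1) := by
  rw [volume_pi_pi, ENNReal.ofReal_prod_of_nonneg fun i _ => ha i.1]
  simp only [Real.volume_Icc, sub_zero]

lemma aux_box_proj (a : Fin n → ℝ) (ha : ∀ i, 0 ≤ a i) (S : Finset (Fin n)) :
    (fun (x : Fin n → ℝ) (i : S) => x i.1) '' (Set.pi Set.univ fun i => Set.Icc 0 (a i)) =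
      Set.pi Set.univ (fun i : S => Set.Icc 0 (a i.1)) := by
  ext y
  constructor
  · rintro ⟨x, hx, rfl⟩ i _
    exact hx i.1 (mem_univ _)
  · intro hy
    refine ⟨fun i => if h : i ∈ S then y ⟨i, h⟩ else 0, fun i _ => ?_, ?_⟩
    · dsimp only
      split_ifs with h
      · exact hy ⟨i, h⟩ (mem_univ _)
      · exact ⟨le_refl 0, ha i⟩
    · funext i
      simp [i.2]

lemma aux_projVol_union_bounds (a b : Fin n → ℝ) (ha : ∀ i, 0 ≤ a i) (hb : ∀ i, 0 ≤ b i)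
    (S : Finset (Fin n)) :
    (∏ i : S, a i.1) ≤ projVol ((Set.pi Set.univ fun i => Set.Icc 0 (a i)) ∪
        (Set.pi Set.univ fun i => Set.Icc 0 (b i))) S ∧
    (∏ i : S, b i.1) ≤ projVol ((Set.pi Set.univ fun i => Set.Icc 0 (a i)) ∪
        (Set.pi Set.univ fun i => Set.Icc 0 (b i))) S ∧
    projVol ((Set.pi Set.univ fun i => Set.Icc 0 (a i)) ∪
        (Set.pi Set.univ fun i => Set.Icc 0 (b i))) S ≤ (∏ i : S, a i.1) + (∏ i : S, b i.1) := by
  have himg : (fun (x : Fin n → ℝ) (i : S) => x i.1) ''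
      ((Set.pi Set.univ fun i => Set.Icc 0 (a i)) ∪ (Set.pi Set.univ fun i => Set.Icc 0 (b i)))
      = Set.pi Set.univ (fun i : S => Set.Icc (0:ℝ) (a i.1)) ∪
        Set.pi Set.univ (fun i : S => Set.Icc (0:ℝ) (b i.1)) := by
    rw [Set.image_union, aux_box_proj a ha, aux_box_proj b hb]
  have hle : volume (Set.pi Set.univ (fun i : S => Set.Icc (0:ℝ) (a i.1)) ∪
      Set.pi Set.univ (fun i : S => Set.Icc (0:ℝ) (b i.1))) ≤
      ENNReal.ofReal (∏ i : S, a i.1) + ENNReal.ofReal (∏ i : S, b i.1) := by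
    refine (measure_union_le _ _).trans ?_
    rw [aux_box_vol a ha, aux_box_vol b hb]
  have hfin : volume (Set.pi Set.univ (fun i : S => Set.Icc (0:ℝ) (a i.1)) ∪
      Set.pi Set.univ (fun i : S => Set.Icc (0:ℝ) (b i.1))) ≠ ⊤ :=
    (hle.trans_lt (by finiteness)).ne
  have hga := (aux_box_vol a ha S).symm.le.trans
    (measure_mono (Set.subset_union_left
      (t := Set.pi Set.univ (fun i : S => Set.Icc (0:ℝ) (b i.1)))))
  have hgb := (aux_box_vol b hb S).symm.le.trans
    (measure_mono (Set.subset_union_right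
      (s := Set.pi Set.univ (fun i : S => Set.Icc (0:ℝ) (a i.1)))))
  have hpa : 0 ≤ ∏ i : S, a i.1 := Finset.prod_nonneg fun i _ => ha i.1
  have hpb : 0 ≤ ∏ i : S, b i.1 := Finset.prod_nonneg fun i _ => hb i.1
  unfold projVol
  rw [himg]
  refine ⟨?_, ?_, ?_⟩
  · rw [← ENNReal.ofReal_toReal hfin] at hga
    exact (ENNReal.ofReal_le_ofReal_iff ENNReal.toReal_nonneg).mp hga
  · rw [← ENNReal.ofReal_toReal hfin] at hgb
    exact (ENNReal.ofReal_le_ofReal_iff ENNReal.toReal_nonneg).mp hgb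
  · calc (volume _).toReal ≤ (ENNReal.ofReal (∏ i : S, a i.1) +
        ENNReal.ofReal (∏ i : S, b i.1)).toReal := ENNReal.toReal_mono (by finiteness) hle
    _ = (∏ i : S, a i.1) + (∏ i : S, b i.1) := by
        rw [ENNReal.toReal_add (by finiteness) (by finiteness),
          ENNReal.toReal_ofReal hpa, ENNReal.toReal_ofReal hpb]

lemma aux_mem_polytope_or_sep {k : ℕ} (α : Fin k → ℝ) (hα : ∀ i, 0 ≤ α i)
    (v : Fin k → (Fin n → ℝ)) (w : Fin n → ℝ) :
    (∃ c : Fin k → ℝ, (∀ i, 0 ≤ c i ∧ c i ≤ α i) ∧ ∑ i, c i • v i = w) ∨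
    (∃ f : (Fin n → ℝ) →L[ℝ] ℝ, (∑ i, α i * max (f (v i)) 0) < f w) := by
  classical
  set L : (Fin k → ℝ) →ₗ[ℝ] (Fin n → ℝ) :=
    ∑ i, LinearMap.smulRight (LinearMap.proj i) (v i) with hL
  have hLapp : ∀ c, L c = ∑ i, c i • v i := by
    intro c
    simp [hL, LinearMap.sum_apply]
  set K : Set (Fin k → ℝ) := Set.pi Set.univ fun i => Set.Icc 0 (α i) with hK
  by_cases hw : w ∈ L '' K
  · obtain ⟨c, hc, hcw⟩ := hw
    exact Or.inl ⟨c, fun i => hc i (mem_univ _), by rw [← hLapp]; exact hcw⟩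
  · right
    have hconv : Convex ℝ (L '' K) :=
      (convex_pi fun i _ => convex_Icc _ _).linear_image L
    have hcl : IsClosed (L '' K) :=
      ((isCompact_univ_pi fun i => isCompact_Icc).image
        L.continuous_of_finiteDimensional).isClosed
    obtain ⟨f, u, hfP, hfw⟩ := geometric_hahn_banach_closed_point hconv hcl hw
    refine ⟨f, ?_⟩
    set c : Fin k → ℝ := fun i => if 0 ≤ f (v i) then α i else 0 with hc
    have hmem : c ∈ K := by
      intro i _
      rw [hc]
      dsimp only
      split_ifs
      · exact ⟨hα i, le_refl _⟩
      · exact ⟨le_refl _, hα i⟩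
    have key : (∑ i, α i * max (f (v i)) 0) = f (L c) := by
      rw [hLapp, map_sum]
      refine Finset.sum_congr rfl fun i _ => ?_
      rw [_root_.map_smul, smul_eq_mul, hc]
      dsimp only
      split_ifs with h
      · rw [max_eq_left h]
      · rw [max_eq_right (le_of_not_ge h), mul_zero, zero_mul]
    rw [key]
    exact lt_trans (hfP _ ⟨c, hmem, rfl⟩) hfw

lemma aux_ind_eq_sum (S : Finset (Fin n)) :
    (fun x => if x ∈ S then (1:ℝ) else 0) = ∑ i ∈ S, Pi.single i (1:ℝ) := by
  funext x
  rw [Finset.sum_apply]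
  simp [Pi.single_apply]

end aux

/-- Exact Single Cover Theorem. -/
theorem stmt_10 {n k m : ℕ} (α : Fin k → ℝ) (β : Fin m → ℝ)
    (hα : ∀ i, 0 < α i) (hβ : ∀ j, 0 < β j)
    (A : Fin k → Finset (Fin n)) (B : Fin m → Finset (Fin n))
    (hineq : ∀ T : Set (Fin n → ℝ), IsCompact T →
      (∀ S : Finset (Fin n), S.Nonempty → 0 < projVol T S) →
      ∏ j, projVol T (B j) ^ (β j) ≤ ∏ i, projVol T (A i) ^ (α i)) :
    ∀ j : Fin m, ∃ c : Fin k → ℝ, (∀ i, 0 ≤ c i ∧ c i ≤ α i) ∧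
      (∑ i, c i • (fun x : Fin n => if x ∈ A i then (1 : ℝ) else 0)) =
        β j • (fun x : Fin n => if x ∈ B j then (1 : ℝ) else 0) := by
  intro j
  rcases aux_mem_polytope_or_sep α (fun i => (hα i).le)
      (fun i => (fun x : Fin n => if x ∈ A i then (1 : ℝ) else 0))
      ((β j) • (fun x : Fin n => if x ∈ B j then (1 : ℝ) else 0)) with h | ⟨f, hf⟩
  · exact h
  exfalso
  set t : Fin n → ℝ := fun i => f (Pi.single i 1) with ht
  have hfind : ∀ S : Finset (Fin n), f (fun x => if x ∈ S then (1:ℝ) else 0) = ∑ i ∈ S, t i := by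
    intro S
    rw [aux_ind_eq_sum, map_sum]
  set σ : Fin k → ℝ := fun i => ∑ x ∈ A i, t x with hσ
  set τ : ℝ := ∑ x ∈ B j, t x with hτ
  have hf' : (∑ i, α i * max (σ i) 0) < β j * τ := by
    have h1 : f ((β j) • (fun x : Fin n => if x ∈ B j then (1 : ℝ) else 0)) = β j * τ := by
      rw [_root_.map_smul, smul_eq_mul, hfind (B j)]
    have h2 : ∀ i, f (fun x : Fin n => if x ∈ A i then (1 : ℝ) else 0) = σ i :=
      fun i => hfind (A i)
    rw [h1] at hf
    refine lt_of_le_of_lt (le_of_eq ?_) hf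
    exact Finset.sum_congr rfl fun i _ => by rw [h2 i]
  set Sg : ℝ := ∑ i, α i * max (σ i) 0 with hSg
  have hSgnonneg : 0 ≤ Sg :=
    Finset.sum_nonneg fun i _ => mul_nonneg (hα i).le (le_max_right _ _)
  set D : ℝ := β j * τ - Sg with hD
  have hDpos : 0 < D := by rw [hD]; linarith
  set A0 : ℝ := ∑ i, α i with hA0
  have hA0nonneg : 0 ≤ A0 := Finset.sum_nonneg fun i _ => (hα i).le
  have hlog2 : 0 < Real.log 2 := Real.log_pos one_lt_two
  set lam : ℝ := (1 + A0 * Real.log 2) / D with hlam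
  have hlampos : 0 < lam := div_pos (by positivity) hDpos
  have hlamD : lam * D = 1 + A0 * Real.log 2 := div_mul_cancel₀ _ hDpos.ne'
  set b : Fin n → ℝ := fun i => Real.exp (lam * t i) with hb
  have hbpos : ∀ i, 0 ≤ b i := fun i => (Real.exp_pos _).le
  set T : Set (Fin n → ℝ) := (Set.pi Set.univ fun i => Set.Icc 0 ((fun _ => (1:ℝ)) i)) ∪
      (Set.pi Set.univ fun i => Set.Icc 0 (b i)) with hT
  have hbounds := fun S => aux_projVol_union_bounds (fun _ => (1:ℝ)) b
    (fun _ => zero_le_one) hbpos S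
  have hprod_one : ∀ S : Finset (Fin n), (∏ i : S, (fun _ => (1:ℝ)) i.1) = 1 := by
    intro S; simp
  have hprod_b : ∀ S : Finset (Fin n), (∏ i : S, b i.1) = Real.exp (lam * ∑ x ∈ S, t x) := by
    intro S
    rw [Finset.prod_coe_sort S (fun x => b x), hb]
    rw [← Real.exp_sum, Finset.mul_sum]
  have hTc : IsCompact T :=
    (isCompact_univ_pi fun i => isCompact_Icc).union (isCompact_univ_pi fun i => isCompact_Icc)
  have honele : ∀ S : Finset (Fin n), 1 ≤ projVol T S := by
    intro S
    have := (hbounds S).1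
    rwa [hprod_one S] at this
  have hTpos : ∀ S : Finset (Fin n), S.Nonempty → 0 < projVol T S :=
    fun S _ => lt_of_lt_of_le one_pos (honele S)
  have hmain := hineq T hTc hTpos
  -- lower bound on LHS
  have hlow : Real.exp (β j * (lam * τ)) ≤ ∏ j', projVol T (B j') ^ (β j') := by
    have h1 : Real.exp (β j * (lam * τ)) = Real.exp (lam * τ) ^ (β j) := by
      rw [← Real.exp_mul, mul_comm]
    have h2 : Real.exp (lam * τ) ≤ projVol T (B j) := by
      have := (hbounds (B j)).2.1
      rwa [hprod_b (B j), ← hτ] at this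
    calc Real.exp (β j * (lam * τ)) = Real.exp (lam * τ) ^ (β j) := h1
      _ ≤ projVol T (B j) ^ (β j) :=
        Real.rpow_le_rpow (Real.exp_pos _).le h2 (hβ j).le
      _ = ∏ j', (if j' = j then projVol T (B j) ^ (β j) else 1) := by
        rw [Finset.prod_ite_eq' Finset.univ j (fun _ => projVol T (B j) ^ (β j))]
        simp
      _ ≤ ∏ j', projVol T (B j') ^ (β j') := by
        refine Finset.prod_le_prod (fun j' _ => ?_) (fun j' _ => ?_)
        · split_ifs
          · exact Real.rpow_nonneg (le_trans zero_le_one (honele (B j))) _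
          · exact zero_le_one
        · split_ifs with h
          · subst h; exact le_refl _
          · exact Real.one_le_rpow (honele (B j')) (hβ j').le
  -- upper bound on RHS
  have hup : (∏ i, projVol T (A i) ^ (α i)) ≤ Real.exp (A0 * Real.log 2 + lam * Sg) := by
    have hbnd : ∀ i, projVol T (A i) ≤ Real.exp (Real.log 2 + lam * max (σ i) 0) := by
      intro i
      have h3 := (hbounds (A i)).2.2
      rw [hprod_one (A i), hprod_b (A i)] at h3
      have hσi : σ i = ∑ x ∈ A i, t x := rfl
      rw [← hσi] at h3
      have h4 : Real.exp (Real.log 2 + lam * max (σ i) 0) =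
          Real.exp (lam * max (σ i) 0) + Real.exp (lam * max (σ i) 0) := by
        rw [Real.exp_add, Real.exp_log two_pos]; ring
      have h5 : (1:ℝ) ≤ Real.exp (lam * max (σ i) 0) := by
        rw [← Real.exp_zero]
        exact Real.exp_le_exp.mpr (mul_nonneg hlampos.le (le_max_right _ _))
      have h6 : Real.exp (lam * σ i) ≤ Real.exp (lam * max (σ i) 0) :=
        Real.exp_le_exp.mpr (mul_le_mul_of_nonneg_left (le_max_left _ _) hlampos.le)
      rw [h4]
      linarith
    calc (∏ i, projVol T (A i) ^ (α i))
        ≤ ∏ i, Real.exp (Real.log 2 + lam * max (σ i) 0) ^ (α i) := by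
          refine Finset.prod_le_prod (fun i _ => ?_) (fun i _ => ?_)
          · exact Real.rpow_nonneg (le_trans zero_le_one (honele (A i))) _
          · exact Real.rpow_le_rpow (le_trans zero_le_one (honele (A i)))
              (hbnd i) (hα i).le
      _ = Real.exp (∑ i, (Real.log 2 + lam * max (σ i) 0) * α i) := by
          rw [Real.exp_sum]
          exact Finset.prod_congr rfl fun i _ => (Real.exp_mul _ _).symm
      _ = Real.exp (A0 * Real.log 2 + lam * Sg) := by
          congr 1
          rw [hA0, hSg, Finset.sum_mul, Finset.mul_sum]
          rw [← Finset.sum_add_distrib]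
          exact Finset.sum_congr rfl fun i _ => by ring
  have hfinal : Real.exp (β j * (lam * τ)) ≤ Real.exp (A0 * Real.log 2 + lam * Sg) :=
    (hlow.trans hmain).trans hup
  rw [Real.exp_le_exp] at hfinal
  have : lam * D ≤ A0 * Real.log 2 := by rw [hD]; ring_nf; ring_nf at hfinal; linarith
  rw [hlamD] at this
  linarith
end

section
/- Let π ∈ ℝ^{2ⁿ−1} be indexed by nonempty S ⊆ [n]. Suppose there exist reals f_{S,i} for i ∈ S ⊆ [n] satisfying ∑_{i∈S} f_{S,i} = π_S for all S and f_{S,i} ≥ f_{S',i} whenever i ∈ S ⊂ S'. Then for any families 𝒜, 𝒞 of nonempty subsets of [n] such that 𝒜 covers 𝒞 (equal element multiplicities and an incidence bijection f with f(A,t)=(B,t), A⊆B), one has ∑_{B∈𝒞} π_B ≤ ∑_{A∈𝒜} π_A. -/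
/-- Every point of the rectangular-flower LP region satisfies all
nonuniform-cover inequalities. -/
theorem stmt_17 {n k m : ℕ} (π : Finset (Fin n) → ℝ) (f : Finset (Fin n) → Fin n → ℝ)
    (hsum : ∀ S : Finset (Fin n), S.Nonempty → ∑ i ∈ S, f S i = π S)
    (hmono : ∀ S S' : Finset (Fin n), ∀ i ∈ S, S ⊂ S' → f S' i ≤ f S i)
    (A : Fin k → Finset (Fin n)) (B : Fin m → Finset (Fin n))
    (hAne : ∀ i, (A i).Nonempty) (hBne : ∀ j, (B j).Nonempty)
    (hmult : ∀ x : Fin n,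
      (Finset.univ.filter (fun i => x ∈ A i)).card =
        (Finset.univ.filter (fun j => x ∈ B j)).card)
    (g : {p : Fin k × Fin n // p.2 ∈ A p.1} ≃ {q : Fin m × Fin n // q.2 ∈ B q.1})
    (hg : ∀ p, ((g p).1.2 = p.1.2) ∧ A p.1.1 ⊆ B (g p).1.1) :
    ∑ j, π (B j) ≤ ∑ i, π (A i) := by
  have reindex : ∀ (l : ℕ) (C : Fin l → Finset (Fin n)) (_ : ∀ i, (C i).Nonempty),
      ∑ i, π (C i) = ∑ p : {p : Fin l × Fin n // p.2 ∈ C p.1}, f (C p.1.1) p.1.2 := by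
    intro l C hCne
    calc ∑ i, π (C i) = ∑ i, ∑ x ∈ C i, f (C i) x := by
          refine Finset.sum_congr rfl fun i _ => (hsum (C i) (hCne i)).symm
      _ = ∑ i : Fin l, ∑ x : Fin n, if x ∈ C i then f (C i) x else 0 := by
          refine Finset.sum_congr rfl fun i _ => ?_
          rw [Finset.sum_ite_mem, Finset.univ_inter]
      _ = ∑ p : Fin l × Fin n, if p.2 ∈ C p.1 then f (C p.1) p.2 else 0 := by
          rw [Fintype.sum_prod_type]
      _ = ∑ p : {p : Fin l × Fin n // p.2 ∈ C p.1}, f (C p.1.1) p.1.2 := by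
          rw [← Finset.sum_filter, Finset.sum_subtype (p := fun p : Fin l × Fin n => p.2 ∈ C p.1) (Finset.univ.filter
            (fun p : Fin l × Fin n => p.2 ∈ C p.1)) (by simp) (fun p => f (C p.1) p.2)]
  rw [reindex k A hAne, reindex m B hBne]
  rw [← Equiv.sum_comp g (fun q : {q : Fin m × Fin n // q.2 ∈ B q.1} => f (B q.1.1) q.1.2)]
  refine Finset.sum_le_sum fun p _ => ?_
  obtain ⟨hx, hsub⟩ := hg p
  rw [hx]
  rcases eq_or_ne (A p.1.1) (B (g p).1.1) with h | h
  · rw [h]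
  · exact hmono _ _ _ p.2 (hsub.ssubset_of_ne h)
end

section
/- If a vector π ∈ ℝ^{2ⁿ−1} admits reals f_{S,i} (for i ∈ S, ∅ ≠ S ⊆ [n]) with ∑_{i∈S} f_{S,i} = π_S and f_{S,i} ≥ f_{S',i} for all i ∈ S ⊂ S', then there exists a compact set F ⊆ ℝⁿ (a rectangular flower, namely a finite union of axis-parallel boxes F_S ⊆ span(S)) such that log|F_S| = π_S for every nonempty S ⊆ [n]. -/
open MeasureTheory

/-- Every feasible point of the rectangular-flower LP is constructible by a
rectangular flower (a finite union of axis-parallel boxes, one in each span(S)). -/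
theorem stmt_18 {n : ℕ} (π : Finset (Fin n) → ℝ) (f : Finset (Fin n) → Fin n → ℝ)
    (hsum : ∀ S : Finset (Fin n), S.Nonempty → ∑ i ∈ S, f S i = π S)
    (hmono : ∀ S S' : Finset (Fin n), ∀ i ∈ S, S ⊂ S' → f S' i ≤ f S i) :
    ∃ F : Set (Fin n → ℝ), IsCompact F ∧
      (∃ b : Finset (Fin n) → Fin n → ℝ,
        F = ⋃ S ∈ {S : Finset (Fin n) | S.Nonempty},
          {x : Fin n → ℝ | ∀ i : Fin n,
            (i ∈ S → x i ∈ Set.Icc 0 (b S i)) ∧ (i ∉ S → x i = 0)}) ∧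
      (∀ S : Finset (Fin n), S.Nonempty → Real.log (projVol F S) = π S) := by
  set b : Finset (Fin n) → Fin n → ℝ := fun S i => Real.exp (f S i) with hb
  set box : Finset (Fin n) → Set (Fin n → ℝ) := fun S =>
    {x : Fin n → ℝ | ∀ i : Fin n,
      (i ∈ S → x i ∈ Set.Icc 0 (b S i)) ∧ (i ∉ S → x i = 0)} with hbox
  set F : Set (Fin n → ℝ) := ⋃ S ∈ {S : Finset (Fin n) | S.Nonempty}, box S with hF
  have hboxpi : ∀ S : Finset (Fin n), box S =
      Set.pi Set.univ (fun i => if i ∈ S then Set.Icc 0 (b S i) else {(0:ℝ)}) := by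
    intro S
    ext x
    simp only [hbox, Set.mem_setOf_eq, Set.mem_pi, Set.mem_univ, true_implies]
    constructor
    · intro h i
      by_cases hi : i ∈ S <;> simp [hi, (h i).1, (h i).2]
    · intro h i
      have := h i
      by_cases hi : i ∈ S <;> simp [hi] at this <;> simp [hi, this]
  have hcomp : IsCompact F := by
    apply Set.Finite.isCompact_biUnion (Set.toFinite _)
    intro S _
    rw [hboxpi S]
    apply isCompact_univ_pi
    intro i
    by_cases hi : i ∈ S <;> simp [hi, isCompact_Icc, isCompact_singleton]
  refine ⟨F, hcomp, ⟨b, rfl⟩, ?_⟩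
  intro S hS
  -- the projection map
  set p : (Fin n → ℝ) → (S → ℝ) := fun x (i : S) => x i.1 with hp
  set B : Set (S → ℝ) := Set.pi Set.univ (fun i : S => Set.Icc 0 (b S i.1)) with hB
  set N : Set (S → ℝ) := ⋃ i : S, {y : S → ℝ | y i = 0} with hN
  have hBP : B ⊆ p '' F := by
    intro y hy
    refine ⟨fun i => if h : i ∈ S then y ⟨i, h⟩ else 0, ?_,
      funext fun i => by simp [hp, dif_pos i.2]⟩
    refine Set.mem_biUnion hS ?_
    intro i
    constructor
    · intro hi
      simp only [dif_pos hi]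
      exact hy ⟨i, hi⟩ (Set.mem_univ _)
    · intro hi
      simp [dif_neg hi]
  have hPBN : p '' F ⊆ B ∪ N := by
    rintro _ ⟨x, hx, rfl⟩
    simp only [hF, Set.mem_iUnion, Set.mem_setOf_eq] at hx
    obtain ⟨S', hS', hxS'⟩ := hx
    by_cases hSS' : S ⊆ S'
    · left
      intro i _
      have hxi := (hxS' i.1).1 (hSS' i.2)
      have hle : b S' i.1 ≤ b S i.1 := by
        rcases eq_or_ne S S' with h | h
        · exact le_of_eq (congrArg (fun t => b t i.1) h.symm)
        · exact Real.exp_le_exp.2 (hmono S S' i.1 i.2 (lt_of_le_of_ne hSS' h))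
      exact ⟨hxi.1, le_trans hxi.2 hle⟩
    · right
      obtain ⟨i, hiS, hiS'⟩ := Finset.not_subset.mp hSS'
      exact Set.mem_iUnion.2 ⟨⟨i, hiS⟩, (hxS' i).2 hiS'⟩
  have hNnull : volume N = 0 := by
    refine measure_iUnion_null fun i => ?_
    have : {y : S → ℝ | y i = 0} =
        Set.pi Set.univ (fun j : S => if j = i then ({(0:ℝ)} : Set ℝ) else Set.univ) := by
      ext y
      simp only [Set.mem_setOf_eq, Set.mem_pi, Set.mem_univ, true_implies]
      constructor
      · intro h j
        by_cases hj : j = i <;> simp [hj, h]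
      · intro h
        have := h i
        simpa using this
    rw [this, volume_pi_pi]
    refine Finset.prod_eq_zero (Finset.mem_univ i) ?_
    simp
  have hvol : volume (p '' F) = volume B := by
    refine le_antisymm ?_ (measure_mono hBP)
    calc volume (p '' F) ≤ volume (B ∪ N) := measure_mono hPBN
      _ ≤ volume B + volume N := measure_union_le _ _
      _ = volume B := by rw [hNnull, add_zero]
  have hvolB : volume B = ∏ i : S, ENNReal.ofReal (b S i.1) := by
    rw [hB, volume_pi_pi]
    congr 1
    ext i
    rw [Real.volume_Icc, sub_zero]
  have : projVol F S = ∏ i ∈ S, Real.exp (f S i) := by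
    unfold projVol
    rw [show (fun (x : Fin n → ℝ) (i : S) => x i.1) = p from rfl, hvol, hvolB,
      ENNReal.toReal_prod]
    rw [← Finset.prod_coe_sort S (fun i => Real.exp (f S i))]
    exact Finset.prod_congr rfl fun i _ => ENNReal.toReal_ofReal (Real.exp_nonneg _)
  rw [this, ← Real.exp_sum, hsum S hS, Real.log_exp]
end
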